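/- arXiv:1208.3360 — 2 statements merged into one kernel-verified Lean document; each statement's English description precedes it below -/
import Mathlib

section
/- Let M be an r×r matrix partitioned by an index set C ⊆ {1,...,r} and its complement D, such that the block M_{C×C} is invertible. Then for subsets I, J ⊆ {1,...,r} with I ∩ J = C, writing Ī = I \ C and J̄ = J \ C, the minor det(M_{I×J}) equals det(M_{C×C})·det(M̄_{Ī×J̄}), where M̄ = M_{D×D} - M_{D×C} M_{C×C}^{-1} M_{C×D} is the Schur complement. -/
open Matrix Finset

/-- Schur-complement factorization of a minor: for `I, J` with `C = I ∩ J` and `M_{C×C}`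
invertible, `det(M_{I×J}) = det(M_{C×C}) · det(M̄_{Ī×J̄})` where
`M̄ = M_{D×D} − M_{D×C} M_{C×C}⁻¹ M_{C×D}` is the Schur complement (here encoded by the
function `N`, which agrees with `M̄` on `D × D`), the minor `M_{I×J}` being taken with the
rows/columns of `C` enumerated first. -/
theorem det_minor_eq_det_mul_det_schur
    {K : Type*} [Field K] {r m c k : ℕ} (M : Matrix (Fin r) (Fin r) K)
    (I J : Finset (Fin r)) (hI : I.card = m) (hJ : J.card = m)
    (hC : (I ∩ J).card = c)
    (hIb : (I \ (I ∩ J)).card = k) (hJb : (J \ (I ∩ J)).card = k)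
    (MCC : Matrix (Fin c) (Fin c) K)
    (hMCC : MCC = Matrix.of fun a b =>
      M ((I ∩ J).orderIsoOfFin hC a : Fin r) ((I ∩ J).orderIsoOfFin hC b : Fin r))
    (hinv : IsUnit MCC.det)
    (N : Matrix (Fin r) (Fin r) K)
    (hN : ∀ i j, N i j = M i j - ∑ a : Fin c, ∑ b : Fin c,
      M i ((I ∩ J).orderIsoOfFin hC a : Fin r) * MCC⁻¹ a b *
        M ((I ∩ J).orderIsoOfFin hC b : Fin r) j) :
    Matrix.det (Matrix.of fun (i j : Fin c ⊕ Fin k) =>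
      M (Sum.elim (fun a => ((I ∩ J).orderIsoOfFin hC a : Fin r))
            (fun a => ((I \ (I ∩ J)).orderIsoOfFin hIb a : Fin r)) i)
        (Sum.elim (fun a => ((I ∩ J).orderIsoOfFin hC a : Fin r))
            (fun a => ((J \ (I ∩ J)).orderIsoOfFin hJb a : Fin r)) j)) =
    MCC.det * Matrix.det (Matrix.of fun (a b : Fin k) =>
      N ((I \ (I ∩ J)).orderIsoOfFin hIb a : Fin r)
        ((J \ (I ∩ J)).orderIsoOfFin hJb b : Fin r)) := by
  set cemb : Fin c → Fin r := fun a => ((I ∩ J).orderIsoOfFin hC a : Fin r)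
  set iemb : Fin k → Fin r := fun a => ((I \ (I ∩ J)).orderIsoOfFin hIb a : Fin r)
  set jemb : Fin k → Fin r := fun a => ((J \ (I ∩ J)).orderIsoOfFin hJb a : Fin r)
  have hinvA : Invertible MCC := MCC.invertibleOfIsUnitDet hinv
  have hblock : (Matrix.of fun (i j : Fin c ⊕ Fin k) =>
      M (Sum.elim cemb iemb i) (Sum.elim cemb jemb j)) =
      Matrix.fromBlocks MCC (Matrix.of fun a b => M (cemb a) (jemb b))
        (Matrix.of fun a b => M (iemb a) (cemb b))
        (Matrix.of fun a b => M (iemb a) (jemb b)) := by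
    ext i j
    cases i <;> cases j <;> simp [Matrix.fromBlocks, hMCC, cemb, iemb, jemb, Finset.coe_orderIsoOfFin_apply]
  rw [hblock, Matrix.det_fromBlocks₁₁]
  congr 1
  congr 1
  ext a b
  simp only [Matrix.sub_apply, Matrix.of_apply, hN]
  congr 1
  rw [invOf_eq_nonsing_inv]
  simp only [Matrix.mul_apply, Finset.sum_mul, Finset.mul_sum]
  rw [Finset.sum_comm]
  rfl
end

section
/- Let I, J ⊆ {1,...,r} with |I| = |J| = m and Σ an r×r positive definite matrix with C = I∩J, D = {1,...,r}\C, Ī = I\C, J̄ = J\C. Then det(Σ_{I×J})² = det(Σ_{C×C})² · det(Σ̄_{Ī×J̄})², where Σ̄ = Σ_{D×D} − Σ_{D×C}Σ_{C×C}^{-1}Σ_{C×D}. -/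
/-!
Reorder the rows of `Σ_{I×J}` as `(C, Ī)` and its columns as `(C, J̄)`. This changes the
determinant only by a sign, which the square removes, and turns the minor into the block matrix
`[[Σ_{C×C}, Σ_{C×J̄}], [Σ_{Ī×C}, Σ_{Ī×J̄}]]`. Since `Σ_{C×C}` is positive definite, hence
invertible, the Schur determinant formula gives `det Σ_{C×C} · det Σ̄_{Ī×J̄}`.
-/

open Matrix Finset

open Function Set in
theorem Function.Injective.exists_equiv_comp_eq_of_range_eq {α β γ : Type*} {u : α → γ}
    {v : β → γ} (hu : Injective u) (hv : Injective v) (h : range u = range v) :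
    ∃ σ : α ≃ β, ∀ a, v (σ a) = u a :=
  ⟨(Equiv.ofInjective u hu).trans ((Equiv.setCongr h).trans (Equiv.ofInjective v hv).symm),
    fun a => by simp [Equiv.apply_ofInjective_symm]⟩

namespace Matrix

open Function Set

theorem submatrix_sumElim_sumElim {l m n l' m' n' R : Type*} (A : Matrix n n' R)
    (u₁ : l → n) (u₂ : m → n) (v₁ : l' → n') (v₂ : m' → n') :
    A.submatrix (Sum.elim u₁ u₂) (Sum.elim v₁ v₂) =
      fromBlocks (A.submatrix u₁ v₁) (A.submatrix u₁ v₂) (A.submatrix u₂ v₁)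
        (A.submatrix u₂ v₂) := by
  ext (i | i) (j | j) <;> rfl

theorem sq_det_submatrix_eq_of_range_eq {R : Type*} [CommRing R] [LinearOrder R]
    [IsStrictOrderedRing R] {n α β : Type*} [Fintype α] [DecidableEq α] [Fintype β]
    [DecidableEq β]
    (A : Matrix n n R) {u v : α → n} {u' v' : β → n} (hu : Injective u) (hv : Injective v)
    (hu' : Injective u') (hv' : Injective v') (hru : range u = range u')
    (hrv : range v = range v') :
    (A.submatrix u v).det ^ 2 = (A.submatrix u' v').det ^ 2 := by
  obtain ⟨σ, hσ⟩ := hu.exists_equiv_comp_eq_of_range_eq hu' hru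
  obtain ⟨τ, hτ⟩ := hv.exists_equiv_comp_eq_of_range_eq hv' hrv
  have h : A.submatrix u v = (A.submatrix u' v').submatrix σ τ := by
    ext a b
    simp [hσ, hτ]
  rw [h, ← sq_abs, abs_det_submatrix_equiv_equiv, sq_abs]

end Matrix

namespace Finset

variable {α : Type*} [LinearOrder α]

theorem injective_sumElim_orderEmbOfFin_sdiff (s t : Finset α) {c k : ℕ} (hs : s.card = c)
    (hts : (t \ s).card = k) :
    Function.Injective (Sum.elim (s.orderEmbOfFin hs) ((t \ s).orderEmbOfFin hts)) :=
  (s.orderEmbOfFin hs).injective.sumElim ((t \ s).orderEmbOfFin hts).injective fun a b hab =>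
    (mem_sdiff.1 (hab ▸ orderEmbOfFin_mem _ hts b)).2 (orderEmbOfFin_mem s hs a)

theorem range_sumElim_orderEmbOfFin_sdiff {s t : Finset α} (hst : s ⊆ t) {c k : ℕ}
    (hs : s.card = c) (hts : (t \ s).card = k) :
    Set.range (Sum.elim (s.orderEmbOfFin hs) ((t \ s).orderEmbOfFin hts)) = t := by
  rw [Set.Sum.elim_range, range_orderEmbOfFin, range_orderEmbOfFin, ← coe_union,
    union_sdiff_of_subset hst]

end Finset

/-- For a positive definite `r × r` matrix `Σ` and index sets `I, J` of cardinality `m`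
with `C = I ∩ J`: `det(Σ_{I×J})² = det(Σ_{C×C})² · det(Σ̄_{Ī×J̄})²`, where
`Σ̄ = Σ_{D×D} − Σ_{D×C} Σ_{C×C}⁻¹ Σ_{C×D}` is the Schur complement (encoded here by the
function `N`, which agrees with `Σ̄` on `D × D`). -/
theorem sq_det_minor_eq_schur {r m c k : ℕ} (S : Matrix (Fin r) (Fin r) ℝ)
    (hpd : S.PosDef)
    (I J : Finset (Fin r)) (hI : I.card = m) (hJ : J.card = m)
    (hC : (I ∩ J).card = c)
    (hIb : (I \ (I ∩ J)).card = k) (hJb : (J \ (I ∩ J)).card = k)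
    (SCC : Matrix (Fin c) (Fin c) ℝ)
    (hSCC : SCC = Matrix.of fun a b =>
      S ((I ∩ J).orderIsoOfFin hC a : Fin r) ((I ∩ J).orderIsoOfFin hC b : Fin r))
    (N : Matrix (Fin r) (Fin r) ℝ)
    (hN : ∀ i j, N i j = S i j - ∑ a : Fin c, ∑ b : Fin c,
      S i ((I ∩ J).orderIsoOfFin hC a : Fin r) * SCC⁻¹ a b *
        S ((I ∩ J).orderIsoOfFin hC b : Fin r) j) :
    (Matrix.det (Matrix.of fun (a b : Fin m) =>
        S (I.orderIsoOfFin hI a : Fin r) (J.orderIsoOfFin hJ b : Fin r))) ^ 2 =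
      SCC.det ^ 2 * (Matrix.det (Matrix.of fun (a b : Fin k) =>
        N ((I \ (I ∩ J)).orderIsoOfFin hIb a : Fin r)
          ((J \ (I ∩ J)).orderIsoOfFin hJb b : Fin r))) ^ 2 := by
  simp only [coe_orderIsoOfFin_apply] at hSCC hN ⊢
  set C := I ∩ J
  set u := C.orderEmbOfFin hC
  set vI := (I \ C).orderEmbOfFin hIb
  set vJ := (J \ C).orderEmbOfFin hJb
  have hSCC' : SCC = S.submatrix u u := hSCC
  have : Invertible SCC := (hSCC' ▸ hpd.submatrix u.injective).isUnit.invertible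
  have hschur : S.submatrix vI vJ - S.submatrix vI u * ⅟SCC * S.submatrix u vJ =
      N.submatrix vI vJ := by
    ext a b
    simp only [Matrix.sub_apply, submatrix_apply, hN, invOf_eq_nonsing_inv, mul_apply, sum_mul]
    rw [sum_comm]
  calc _ = (S.submatrix (Sum.elim u vI) (Sum.elim u vJ)).det ^ 2 :=
        sq_det_submatrix_eq_of_range_eq S (I.orderEmbOfFin hI).injective
          (J.orderEmbOfFin hJ).injective (injective_sumElim_orderEmbOfFin_sdiff _ _ hC hIb)
          (injective_sumElim_orderEmbOfFin_sdiff _ _ hC hJb)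
          (by rw [range_orderEmbOfFin, range_sumElim_orderEmbOfFin_sdiff inter_subset_left])
          (by rw [range_orderEmbOfFin, range_sumElim_orderEmbOfFin_sdiff inter_subset_right])
    _ = _ := by
      rw [submatrix_sumElim_sumElim, ← hSCC', det_fromBlocks₁₁, hschur, mul_pow]
      rfl
end
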